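/- Let q be a positive power of an odd prime p, let k ≥ 1 be an integer, and let M_a, M_b, M_c be arbitrary k×k matrices over 𝔽_q. Then the assignments a ↦ U_a, b ↦ U_b, c ↦ U_c extend to a group homomorphism ρ_{M_a,M_b,M_c} : 𝒢_{Ã₂}(p) → SL_{3k}(𝔽_q). -/

import Mathlib

/-- The commutator [x,y] = x⁻¹y⁻¹xy (the convention used in the paper). -/
def pc {G : Type*} [Group G] (x y : G) : G := x⁻¹ * y⁻¹ * x * y

/-- The relators of the Kac–Moody–Steinberg group 𝒢_{Ã₂}(p):
a^p, b^p, c^p, [a,b,a], [a,b,b], [b,c,b], [b,c,c], [a,c,a], [a,c,c]. -/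
def kmsA2Rels (p : ℕ) : Set (FreeGroup (Fin 3)) :=
  let a : FreeGroup (Fin 3) := FreeGroup.of 0
  let b : FreeGroup (Fin 3) := FreeGroup.of 1
  let c : FreeGroup (Fin 3) := FreeGroup.of 2
  {a ^ p, b ^ p, c ^ p,
   pc (pc a b) a, pc (pc a b) b,
   pc (pc b c) b, pc (pc b c) c,
   pc (pc a c) a, pc (pc a c) c}

/-- The Kac–Moody–Steinberg group 𝒢_{Ã₂}(p). -/
abbrev KMSA2 (p : ℕ) : Type := PresentedGroup (kmsA2Rels p)

/-- An n×n block matrix with k×k blocks: identity blocks on the diagonal, and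
off-diagonal (i,j)-block `off i j`. -/
def blockOne {n k : ℕ} {F : Type*} [CommRing F]
    (off : Fin n → Fin n → Matrix (Fin k) (Fin k) F) :
    Matrix (Fin n × Fin k) (Fin n × Fin k) F :=
  fun x y =>
    if x.1 = y.1 then (1 : Matrix (Fin k) (Fin k) F) x.2 y.2
    else off x.1 y.1 x.2 y.2

/-- The 3k×3k matrix U_a: identity diagonal blocks, block (1,2) equal to M_a. -/
def Ua {k : ℕ} {F : Type*} [CommRing F] (Ma : Matrix (Fin k) (Fin k) F) :
    Matrix (Fin 3 × Fin k) (Fin 3 × Fin k) F :=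
  blockOne (fun i j => if i = 0 ∧ j = 1 then Ma else 0)

/-- The 3k×3k matrix U_b: identity diagonal blocks, block (2,3) equal to M_b. -/
def Ub {k : ℕ} {F : Type*} [CommRing F] (Mb : Matrix (Fin k) (Fin k) F) :
    Matrix (Fin 3 × Fin k) (Fin 3 × Fin k) F :=
  blockOne (fun i j => if i = 1 ∧ j = 2 then Mb else 0)

/-- The 3k×3k matrix U_c: identity diagonal blocks, block (3,1) equal to M_c. -/
def Uc {k : ℕ} {F : Type*} [CommRing F] (Mc : Matrix (Fin k) (Fin k) F) :
    Matrix (Fin 3 × Fin k) (Fin 3 × Fin k) F :=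
  blockOne (fun i j => if i = 2 ∧ j = 0 then Mc else 0)

/-! `U_a`, `U_b`, `U_c` are block transvections `1 + E_ij ⊗ M` (`i ≠ j`). Since `E_ij ⊗ M` squares
to zero, such a matrix has determinant one and `p`-th power `1 + E_ij ⊗ pM = 1` in characteristic
`p`. Block transvections satisfy the Steinberg relations: two of them commute unless their indices
chain up, and `[1 + E_ij ⊗ M, 1 + E_jl ⊗ M'] = 1 + E_il ⊗ MM'` for distinct `i, j, l`. Hence
`[a,b]`, `[b,c]` and `[c,a] = [a,c]⁻¹` are block transvections in positions `(1,3)`, `(2,1)`,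
`(3,2)`, each commuting with both of its factors. -/

open Matrix Kronecker

section Commutator

variable {G : Type*} [Group G]

theorem pc_eq_of_mul_eq {x y d : G} (h : x * y = y * x * d) : pc x y = d := by
  rw [pc, mul_assoc _ x y, h]
  group

theorem pc_inv (x y : G) : (pc x y)⁻¹ = pc y x := by
  simp only [pc]
  group

theorem map_pc {H : Type*} [Group H] (φ : G →* H) (x y : G) :
    φ (pc x y) = pc (φ x) (φ y) := by
  simp only [pc, map_mul, map_inv]

theorem pc_eq_one_iff {x y : G} : pc x y = 1 ↔ Commute x y := by
  rw [pc, mul_assoc, mul_assoc, inv_mul_eq_one, eq_inv_mul_iff_mul_eq, eq_comm]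
  rfl

end Commutator

theorem KMSA2.exists_hom {G : Type*} [Group G] {p : ℕ} {x y z : G}
    (hx : x ^ p = 1) (hy : y ^ p = 1) (hz : z ^ p = 1)
    (hxy_x : Commute (pc x y) x) (hxy_y : Commute (pc x y) y)
    (hyz_y : Commute (pc y z) y) (hyz_z : Commute (pc y z) z)
    (hxz_x : Commute (pc x z) x) (hxz_z : Commute (pc x z) z) :
    ∃ ρ : KMSA2 p →* G,
      ρ (PresentedGroup.of 0) = x ∧ ρ (PresentedGroup.of 1) = y ∧
        ρ (PresentedGroup.of 2) = z := by
  have hrels : ∀ r ∈ kmsA2Rels p, FreeGroup.lift ![x, y, z] r = 1 := by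
    intro r hr
    simp only [kmsA2Rels, Set.mem_insert_iff, Set.mem_singleton_iff] at hr
    rcases hr with rfl | rfl | rfl | rfl | rfl | rfl | rfl | rfl | rfl <;>
      simp only [map_pow, map_pc, FreeGroup.lift_apply_of, pc_eq_one_iff] <;>
      simpa
  exact ⟨PresentedGroup.toGroup hrels, PresentedGroup.toGroup.of hrels,
    PresentedGroup.toGroup.of hrels, PresentedGroup.toGroup.of hrels⟩

section BlockSingle

variable {n κ F : Type*} [DecidableEq n] [CommRing F]

def blockSingle (i j : n) (M : Matrix κ κ F) : Matrix (n × κ) (n × κ) F :=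
  single i j (1 : F) ⊗ₖ M

theorem blockSingle_mul_blockSingle_same [Fintype n] [Fintype κ] (i j l : n)
    (M M' : Matrix κ κ F) :
    blockSingle i j M * blockSingle j l M' = blockSingle i l (M * M') := by
  rw [blockSingle, blockSingle, ← mul_kronecker_mul, single_mul_single_same, one_mul, blockSingle]

theorem blockSingle_mul_blockSingle_of_ne [Fintype n] [Fintype κ] {i j j' l : n} (h : j ≠ j')
    (M M' : Matrix κ κ F) :
    blockSingle i j M * blockSingle j' l M' = 0 := by
  rw [blockSingle, blockSingle, ← mul_kronecker_mul, single_mul_single_of_ne (h := h),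
    zero_kronecker]

theorem blockSingle_add (i j : n) (M M' : Matrix κ κ F) :
    blockSingle i j (M + M') = blockSingle i j M + blockSingle i j M' :=
  kronecker_add _ _ _

theorem blockSingle_zero (i j : n) : blockSingle i j (0 : Matrix κ κ F) = 0 :=
  kronecker_zero _

theorem blockOne_ite_eq_one_add_blockSingle {m k : ℕ} {i j : Fin m} (h : i ≠ j)
    (M : Matrix (Fin k) (Fin k) F) :
    blockOne (fun i' j' => if i' = i ∧ j' = j then M else 0) = 1 + blockSingle i j M := by
  ext ⟨x, x'⟩ ⟨y, y'⟩
  by_cases hxy : x = y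
  · subst hxy
    simpa [blockOne, blockSingle, one_apply, single_apply] using
      fun hx hx' => absurd (hx.trans hx'.symm) h
  · rcases em (x = i ∧ y = j) with ⟨rfl, rfl⟩ | hij
    · simp [blockOne, blockSingle, one_apply, hxy]
    · simpa [blockOne, blockSingle, one_apply, single_apply, hxy, hij] using
        fun hx hy => absurd ⟨hx.symm, hy.symm⟩ hij

section Transvection

variable [Fintype n] [Fintype κ] [DecidableEq κ]

theorem det_one_add_blockSingle {i j : n} (h : i ≠ j) (M : Matrix κ κ F) :
    det (1 + blockSingle i j M) = 1 := by
  -- `E_ij ⊗ M = (E_ij ⊗ M) * (E_jj ⊗ 1)` and the reversed product vanishes, so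
  -- `det (1 + X * Y) = det (1 + Y * X)` reduces the claim to `det 1 = 1`
  rw [← mul_one M, ← blockSingle_mul_blockSingle_same i j j, det_one_add_mul_comm,
    blockSingle_mul_blockSingle_of_ne h.symm, add_zero, det_one]

theorem one_add_blockSingle_pow {i j : n} (h : i ≠ j) (M : Matrix κ κ F) (m : ℕ) :
    (1 + blockSingle i j M) ^ m = 1 + blockSingle i j (m • M) := by
  induction m with
  | zero => rw [pow_zero, zero_smul, blockSingle_zero, add_zero]
  | succ m ih =>
    rw [pow_succ, ih, add_smul, one_smul, blockSingle_add, mul_add, add_mul, add_mul, one_mul,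
      one_mul, mul_one, blockSingle_mul_blockSingle_of_ne h.symm]
    abel

def blockTransvection {i j : n} (h : i ≠ j) (M : Matrix κ κ F) :
    SpecialLinearGroup (n × κ) F :=
  ⟨1 + blockSingle i j M, det_one_add_blockSingle h M⟩

@[simp]
theorem coe_blockTransvection {i j : n} (h : i ≠ j) (M : Matrix κ κ F) :
    (blockTransvection h M : Matrix (n × κ) (n × κ) F) = 1 + blockSingle i j M :=
  rfl

theorem blockTransvection_pow_char (p : ℕ) [CharP F p] {i j : n} (h : i ≠ j)
    (M : Matrix κ κ F) : blockTransvection h M ^ p = 1 := by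
  suffices (blockTransvection h M : Matrix (n × κ) (n × κ) F) ^ p = 1 from
    Subtype.val_injective this
  rw [coe_blockTransvection, one_add_blockSingle_pow h, ← Nat.cast_smul_eq_nsmul F,
    CharP.cast_eq_zero, zero_smul, blockSingle_zero, add_zero]

theorem commute_blockTransvection {i j i' j' : n} (h : i ≠ j) (h' : i' ≠ j') (hji' : j ≠ i')
    (hj'i : j' ≠ i) (M M' : Matrix κ κ F) :
    Commute (blockTransvection h M) (blockTransvection h' M') := by
  suffices (blockTransvection h M : Matrix (n × κ) (n × κ) F) * blockTransvection h' M' =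
      blockTransvection h' M' * blockTransvection h M from Subtype.val_injective this
  simp only [coe_blockTransvection, mul_add, add_mul, one_mul, mul_one,
    blockSingle_mul_blockSingle_of_ne hji', blockSingle_mul_blockSingle_of_ne hj'i]
  abel

theorem pc_blockTransvection {i j l : n} (hij : i ≠ j) (hjl : j ≠ l) (hil : i ≠ l)
    (M M' : Matrix κ κ F) :
    pc (blockTransvection hij M) (blockTransvection hjl M') = blockTransvection hil (M * M') := by
  refine pc_eq_of_mul_eq (Subtype.val_injective (?_ :
    (blockTransvection hij M : Matrix (n × κ) (n × κ) F) * blockTransvection hjl M' =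
      blockTransvection hjl M' * blockTransvection hij M * blockTransvection hil (M * M')))
  simp only [coe_blockTransvection, mul_add, add_mul, one_mul, mul_one,
    blockSingle_mul_blockSingle_same, blockSingle_mul_blockSingle_of_ne hil.symm,
    blockSingle_mul_blockSingle_of_ne hij.symm, add_zero]
  abel

end Transvection

end BlockSingle

theorem kmsA2_block_rep_general (p e k : ℕ) [Fact p.Prime]
    (Ma Mb Mc : Matrix (Fin k) (Fin k) (GaloisField p e)) :
    ∃ ρ : KMSA2 p →* Matrix.SpecialLinearGroup (Fin 3 × Fin k) (GaloisField p e),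
      (↑(ρ (PresentedGroup.of 0)) : Matrix (Fin 3 × Fin k) (Fin 3 × Fin k)
          (GaloisField p e)) = Ua Ma ∧
      (↑(ρ (PresentedGroup.of 1)) : Matrix (Fin 3 × Fin k) (Fin 3 × Fin k)
          (GaloisField p e)) = Ub Mb ∧
      (↑(ρ (PresentedGroup.of 2)) : Matrix (Fin 3 × Fin k) (Fin 3 × Fin k)
          (GaloisField p e)) = Uc Mc := by
  have h01 : (0 : Fin 3) ≠ 1 := by decide
  have h12 : (1 : Fin 3) ≠ 2 := by decide
  have h20 : (2 : Fin 3) ≠ 0 := by decide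
  have hab : pc (blockTransvection h01 Ma) (blockTransvection h12 Mb) =
      blockTransvection h20.symm (Ma * Mb) := pc_blockTransvection _ _ _ _ _
  have hbc : pc (blockTransvection h12 Mb) (blockTransvection h20 Mc) =
      blockTransvection h01.symm (Mb * Mc) := pc_blockTransvection _ _ _ _ _
  have hac : pc (blockTransvection h01 Ma) (blockTransvection h20 Mc) =
      (blockTransvection h12.symm (Mc * Ma))⁻¹ := by
    rw [← pc_inv, pc_blockTransvection]
  obtain ⟨ρ, ha, hb, hc⟩ := KMSA2.exists_hom (p := p)
    (blockTransvection_pow_char p h01 Ma) (blockTransvection_pow_char p h12 Mb)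
    (blockTransvection_pow_char p h20 Mc)
    (hab ▸ commute_blockTransvection _ _ h20 h01.symm _ _)
    (hab ▸ commute_blockTransvection _ _ h12.symm h20 _ _)
    (hbc ▸ commute_blockTransvection _ _ h01 h12.symm _ _)
    (hbc ▸ commute_blockTransvection _ _ h20.symm h01 _ _)
    (hac ▸ (commute_blockTransvection _ _ h01.symm h12 _ _).inv_left)
    (hac ▸ (commute_blockTransvection _ _ h12 h20.symm _ _).inv_left)
  refine ⟨ρ, ?_, ?_, ?_⟩
  · rw [ha, coe_blockTransvection, Ua, blockOne_ite_eq_one_add_blockSingle h01]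
  · rw [hb, coe_blockTransvection, Ub, blockOne_ite_eq_one_add_blockSingle h12]
  · rw [hc, coe_blockTransvection, Uc, blockOne_ite_eq_one_add_blockSingle h20]

/-- Let q = p^e be a positive power of an odd prime p, k ≥ 1, and M_a, M_b, M_c arbitrary
k×k matrices over 𝔽_q.  Then a ↦ U_a, b ↦ U_b, c ↦ U_c extend to a group homomorphism
𝒢_{Ã₂}(p) → SL_{3k}(𝔽_q). -/
theorem kmsA2_block_rep (p e k : ℕ) [Fact p.Prime] (hodd : Odd p) (he : 1 ≤ e)
    (hk : 1 ≤ k)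
    (Ma Mb Mc : Matrix (Fin k) (Fin k) (GaloisField p e)) :
    ∃ ρ : KMSA2 p →* Matrix.SpecialLinearGroup (Fin 3 × Fin k) (GaloisField p e),
      (↑(ρ (PresentedGroup.of 0)) : Matrix (Fin 3 × Fin k) (Fin 3 × Fin k)
          (GaloisField p e)) = Ua Ma ∧
      (↑(ρ (PresentedGroup.of 1)) : Matrix (Fin 3 × Fin k) (Fin 3 × Fin k)
          (GaloisField p e)) = Ub Mb ∧
      (↑(ρ (PresentedGroup.of 2)) : Matrix (Fin 3 × Fin k) (Fin 3 × Fin k)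
          (GaloisField p e)) = Uc Mc :=
  kmsA2_block_rep_general p e k Ma Mb Mc
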